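/- Fix n, m : ℕ. The predicate on pairs (R, R'), where R is a list of words in n generators and R' is a list of words in m generators, asserting that the presented groups PresentedGroup S and PresentedGroup S' are isomorphic (i.e. Nonempty (PresentedGroup S ≃* PresentedGroup S'), where S ⊆ FreeGroup (Fin n) and S' ⊆ FreeGroup (Fin m) are the sets of elements determined by R and R' respectively) satisfies REPred. -/

import Mathlib

/-!
Two presentations `⟨X | R⟩` and `⟨Y | R'⟩` define isomorphic groups exactly when there are
substitutions `f : X → F(Y)` and `g : Y → F(X)` such that `g` kills `R'` and `g ∘ f` fixes every
generator modulo `R`, and symmetrically. For finite presentations these are finitely many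
statements "the word `w` lies in the normal closure of `R`", and each of them has a finite
witness: an expression of `w`, up to free reduction, as a product of conjugates of relators and
their inverses. Checking a candidate witness is primitive recursive, so isomorphism is the
projection of a primitive recursive relation, hence recursively enumerable.
-/

/-- The set of relators in the free group determined by a list of words. -/
def relsOf {α : Type} (R : List (List (α × Bool))) : Set (FreeGroup α) :=
  {x | ∃ r ∈ R, x = FreeGroup.mk r}

open FreeGroup (lift lift_unique)

namespace PresentedGroup

variable {α β : Type*} {rels : Set (FreeGroup α)} {rels' : Set (FreeGroup β)}

theorem mk_lift (rels : Set (FreeGroup α)) (g : β → FreeGroup α) (x : FreeGroup β) :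
    mk rels (lift g x) = lift (fun b => mk rels (g b)) x :=
  lift_unique ((mk rels).comp (lift g)) (by simp)

def IsLeftInverseSubst (rels : Set (FreeGroup α)) (rels' : Set (FreeGroup β))
    (f : α → FreeGroup β) (g : β → FreeGroup α) : Prop :=
  (∀ r ∈ rels', mk rels (lift g r) = 1) ∧ ∀ a, mk rels (lift g (f a)) = of a

theorem isLeftInverseSubst_of_mulEquiv (e : PresentedGroup rels ≃* PresentedGroup rels')
    {f : α → FreeGroup β} {g : β → FreeGroup α} (hf : ∀ a, mk rels' (f a) = e (of a))
    (hg : ∀ b, mk rels (g b) = e.symm (of b)) : IsLeftInverseSubst rels rels' f g := by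
  have hlift (x : FreeGroup β) : mk rels (lift g x) = e.symm (mk rels' x) := by
    rw [mk_lift]
    exact (lift_unique (f := fun b => mk rels (g b)) ((e.symm : _ →* _).comp (mk rels'))
      fun b => (hg b).symm).symm
  refine ⟨fun r hr => ?_, fun a => ?_⟩
  · rw [hlift, one_of_mem hr, _root_.map_one]
  · rw [hlift, hf, MulEquiv.symm_apply_apply]

def substHom {g : β → FreeGroup α} (hg : ∀ r ∈ rels', mk rels (lift g r) = 1) :
    PresentedGroup rels' →* PresentedGroup rels :=
  toGroup (f := fun b => mk rels (g b)) fun r hr => by rw [← mk_lift, hg r hr]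

theorem substHom_mk {g : β → FreeGroup α} (hg : ∀ r ∈ rels', mk rels (lift g r) = 1)
    (x : FreeGroup β) : substHom hg (mk rels' x) = mk rels (lift g x) := by
  rw [mk_lift]
  exact lift_unique (f := fun b => mk rels (g b)) ((substHom hg).comp (mk rels')) fun b =>
    show substHom hg (of b) = _ from toGroup.of _

theorem substHom_comp_substHom {f : α → FreeGroup β} {g : β → FreeGroup α}
    (hfg : IsLeftInverseSubst rels rels' f g) (hgf : IsLeftInverseSubst rels' rels g f) :
    (substHom hfg.1).comp (substHom hgf.1) = MonoidHom.id _ :=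
  ext fun a => by
    rw [MonoidHom.comp_apply, MonoidHom.id_apply, of, substHom_mk, FreeGroup.lift_apply_of,
      substHom_mk, hfg.2, of]

theorem nonempty_mulEquiv_iff :
    Nonempty (PresentedGroup rels ≃* PresentedGroup rels') ↔
      ∃ (f : α → FreeGroup β) (g : β → FreeGroup α),
        IsLeftInverseSubst rels rels' f g ∧ IsLeftInverseSubst rels' rels g f := by
  constructor
  · rintro ⟨e⟩
    choose f hf using fun a => mk_surjective rels' (e (of a))
    choose g hg using fun b => mk_surjective rels (e.symm (of b))
    exact ⟨f, g, isLeftInverseSubst_of_mulEquiv e hf hg,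
      isLeftInverseSubst_of_mulEquiv e.symm hg (by simpa using hf)⟩
  · rintro ⟨f, g, hfg, hgf⟩
    exact ⟨MonoidHom.toMulEquiv (substHom hgf.1) (substHom hfg.1)
      (substHom_comp_substHom hfg hgf) (substHom_comp_substHom hgf hfg)⟩

end PresentedGroup

open FreeGroup Subgroup

namespace FreeGroup

variable {α β : Type}

theorem reduce_eq_foldr [DecidableEq α] (w : List (α × Bool)) :
    reduce w = w.foldr (fun x v => if v.head? = some (x.1, !x.2) then v.tail else x :: v) [] := by
  induction w with
  | nil => rfl
  | cons x w ih =>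
    rw [List.foldr_cons, ← ih, reduce.cons]
    rcases reduce w with _ | ⟨⟨b, t⟩, v⟩
    · rfl
    · obtain ⟨a, s⟩ := x
      cases s <;> cases t <;> simp [and_comm, eq_comm]

def signedWord (u : List (α × Bool)) (s : Bool) : List (α × Bool) :=
  cond s u (invRev u)

theorem mk_signedWord (u : List (α × Bool)) (s : Bool) :
    mk (signedWord u s) = cond s (mk u) (mk u)⁻¹ := by
  cases s <;> simp [signedWord, inv_mk]

/-- Replaces the generator `i` by the `i`-th word of `fl`, or by the empty word if there is none. -/
def substWord {k : ℕ} (fl : List (List (β × Bool))) (w : List (Fin k × Bool)) :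
    List (β × Bool) :=
  w.flatMap fun x => signedWord (fl.getD x.1 []) x.2

theorem mk_substWord {k : ℕ} (fl : List (List (β × Bool))) (w : List (Fin k × Bool)) :
    mk (substWord fl w) = lift (fun i : Fin k => mk (fl.getD i [])) (mk w) := by
  induction w with
  | nil => rfl
  | cons x w ih =>
    rw [substWord, List.flatMap_cons, ← mul_mk, ← substWord, ih, ← List.singleton_append,
      ← mul_mk, _root_.map_mul, mk_signedWord, lift_mk]
    rcases x with ⟨i, _ | _⟩ <;> simp [inv_mk]

end FreeGroup

section NormalClosureCert

/-- The entry `(u, j, s)` stands for the conjugate `u rⱼ^(±1) u⁻¹` of the `j`-th relator `rⱼ`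
(the empty word if `j` is out of range). -/
abbrev ConjCert (α : Type) := List (List (α × Bool) × ℕ × Bool)

variable {α : Type} (R : List (List (α × Bool)))

theorem forall_mem_relsOf {P : FreeGroup α → Prop} :
    (∀ r ∈ relsOf R, P r) ↔ ∀ w ∈ R, P (mk w) :=
  ⟨fun h w hw => h _ ⟨w, hw, rfl⟩, fun h _ ⟨w, hw, hr⟩ => hr ▸ h w hw⟩

theorem mk_getD_mem_normalClosure (j : ℕ) : mk (R.getD j []) ∈ normalClosure (relsOf R) := by
  rcases lt_or_ge j R.length with hj | hj
  · rw [List.getD_eq_getElem _ _ hj]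
    exact subset_normalClosure ⟨_, List.getElem_mem hj, rfl⟩
  · rw [List.getD_eq_default _ _ hj, ← one_eq_mk]
    exact one_mem _

def conjWord (e : List (α × Bool) × ℕ × Bool) : List (α × Bool) :=
  e.1 ++ signedWord (R.getD e.2.1 []) e.2.2 ++ invRev e.1

def conjProdWord (c : ConjCert α) : List (α × Bool) :=
  c.flatMap (conjWord R)

theorem mk_conjWord (e : List (α × Bool) × ℕ × Bool) :
    mk (conjWord R e) =
      mk e.1 * cond e.2.2 (mk (R.getD e.2.1 [])) (mk (R.getD e.2.1 []))⁻¹ * (mk e.1)⁻¹ := by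
  rw [conjWord, ← mul_mk, ← mul_mk, ← inv_mk, mk_signedWord]

theorem mk_conjProdWord_cons (e : List (α × Bool) × ℕ × Bool) (c : ConjCert α) :
    mk (conjProdWord R (e :: c)) = mk (conjWord R e) * mk (conjProdWord R c) := by
  rw [conjProdWord, List.flatMap_cons, mul_mk]; rfl

theorem mk_conjProdWord_append (c₁ c₂ : ConjCert α) :
    mk (conjProdWord R (c₁ ++ c₂)) = mk (conjProdWord R c₁) * mk (conjProdWord R c₂) := by
  rw [conjProdWord, List.flatMap_append, mul_mk]; rfl

theorem mk_conjProdWord_mem (c : ConjCert α) :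
    mk (conjProdWord R c) ∈ normalClosure (relsOf R) := by
  induction c with
  | nil => exact one_mem _
  | cons e c ih =>
    rw [mk_conjProdWord_cons]
    refine mul_mem ?_ ih
    rw [mk_conjWord]
    have hr := mk_getD_mem_normalClosure R e.2.1
    refine normalClosure_normal.conj_mem _ ?_ _
    cases e.2.2
    · exact inv_mem hr
    · exact hr

theorem mk_conjProdWord_reverse_flip (c : ConjCert α) :
    mk (conjProdWord R (c.map fun e => (e.1, e.2.1, !e.2.2)).reverse) =
      (mk (conjProdWord R c))⁻¹ := by
  induction c with
  | nil => simp [conjProdWord, ← one_eq_mk]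
  | cons e c ih =>
    rw [List.map_cons, List.reverse_cons, mk_conjProdWord_append, ih, mk_conjProdWord_cons R e c,
      mul_inv_rev]
    congr 1
    rw [conjProdWord, List.flatMap_singleton, mk_conjWord, mk_conjWord]
    cases e.2.2 <;> simp

variable [DecidableEq α]

theorem exists_conjProdWord_eq {x : FreeGroup α} (hx : x ∈ normalClosure (relsOf R)) :
    ∃ c, mk (conjProdWord R c) = x := by
  induction hx using closure_induction with
  | mem x hx =>
    obtain ⟨_, ⟨w, hw, rfl⟩, hconj⟩ := Group.mem_conjugatesOfSet_iff.mp hx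
    obtain ⟨j, hj, rfl⟩ := List.mem_iff_getElem.mp hw
    obtain ⟨g, rfl⟩ := isConj_iff.mp hconj
    refine ⟨[(g.toWord, j, true)], ?_⟩
    rw [conjProdWord, List.flatMap_singleton, mk_conjWord, mk_toWord,
      List.getD_eq_getElem _ _ hj]
    rfl
  | one => exact ⟨[], rfl⟩
  | mul x y _ _ hx hy =>
    obtain ⟨c₁, rfl⟩ := hx
    obtain ⟨c₂, rfl⟩ := hy
    exact ⟨c₁ ++ c₂, mk_conjProdWord_append R c₁ c₂⟩
  | inv x _ hx =>
    obtain ⟨c, rfl⟩ := hx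
    exact ⟨_, mk_conjProdWord_reverse_flip R c⟩

def IsNormalClosureCert (t : List (α × Bool)) (c : ConjCert α) : Prop :=
  reduce (conjProdWord R c) = reduce t

theorem exists_isNormalClosureCert_iff (t : List (α × Bool)) :
    (∃ c, IsNormalClosureCert R t c) ↔ mk t ∈ normalClosure (relsOf R) := by
  refine ⟨fun ⟨c, hc⟩ => reduce.exact hc ▸ mk_conjProdWord_mem R c, fun ht => ?_⟩
  obtain ⟨c, hc⟩ := exists_conjProdWord_eq R ht
  exact ⟨c, reduce.sound hc⟩

def AllNormalClosureCert (ts : List (List (α × Bool)))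
    (cs : List (ConjCert α)) : Prop :=
  ∀ i < ts.length, IsNormalClosureCert R (ts.getD i []) (cs.getD i [])

theorem exists_allNormalClosureCert_iff (ts : List (List (α × Bool))) :
    (∃ cs, AllNormalClosureCert R ts cs) ↔ ∀ t ∈ ts, mk t ∈ normalClosure (relsOf R) := by
  constructor
  · rintro ⟨cs, hcs⟩ t ht
    obtain ⟨i, hi, rfl⟩ := List.mem_iff_getElem.mp ht
    rw [← exists_isNormalClosureCert_iff, ← List.getD_eq_getElem _ [] hi]
    exact ⟨_, hcs i hi⟩
  · intro h
    choose! c hc using fun t ht => (exists_isNormalClosureCert_iff R t).mpr (h t ht)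
    refine ⟨ts.map c, fun i hi => ?_⟩
    rw [List.getD_eq_getElem _ _ hi, List.getD_eq_getElem _ _ (by simpa using hi),
      List.getElem_map]
    exact hc _ (List.getElem_mem hi)

end NormalClosureCert

abbrev Word (k : ℕ) := List (Fin k × Bool)

/-- The images `fl`, `gl` of the generators under the two substitutions, and one certificate for
each word of `inverseSubstWords` on either side. -/
abbrev IsoCert (n m : ℕ) :=
  (List (Word m) × List (Word n)) × (List (ConjCert (Fin n)) × List (ConjCert (Fin m)))

section Presentations

variable {n m : ℕ}

def inverseSubstWords (R' fl : List (Word m)) (gl : List (Word n)) : List (Word n) :=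
  R'.map (substWord gl) ++
    (List.finRange n).map fun i : Fin n => substWord gl (fl.getD i []) ++ [(i, false)]

def IsIsoCert (p : List (Word n) × List (Word m)) (c : IsoCert n m) : Prop :=
  AllNormalClosureCert p.1 (inverseSubstWords p.2 c.1.1 c.1.2) c.2.1 ∧
    AllNormalClosureCert p.2 (inverseSubstWords p.1 c.1.2 c.1.1) c.2.2

theorem isLeftInverseSubst_iff_exists_cert (R : List (Word n)) (R' fl : List (Word m))
    (gl : List (Word n)) :
    PresentedGroup.IsLeftInverseSubst (relsOf R) (relsOf R')
        (fun i => mk (fl.getD i [])) (fun j => mk (gl.getD j [])) ↔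
      ∃ cs, AllNormalClosureCert R (inverseSubstWords R' fl gl) cs := by
  simp only [exists_allNormalClosureCert_iff, PresentedGroup.IsLeftInverseSubst,
    inverseSubstWords, List.forall_mem_append, List.forall_mem_map, List.mem_finRange,
    true_implies, ← PresentedGroup.mk_eq_one_iff, mk_substWord, ← mul_mk, forall_mem_relsOf]
  refine and_congr Iff.rfl (forall_congr' fun i => ?_)
  rw [_root_.map_mul, mul_eq_one_iff_eq_inv, ← _root_.map_inv]
  rfl

theorem exists_getD_eq {β : Type} [DecidableEq β] (f : Fin n → FreeGroup β) :
    ∃ fl : List (List (β × Bool)), (fun i : Fin n => mk (fl.getD i [])) = f :=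
  ⟨List.ofFn fun i => (f i).toWord, funext fun i => by
    rw [List.getD_eq_getElem _ _ (by simp), List.getElem_ofFn, mk_toWord]⟩

theorem nonempty_mulEquiv_iff_exists_isIsoCert (R : List (Word n)) (R' : List (Word m)) :
    Nonempty (PresentedGroup (relsOf R) ≃* PresentedGroup (relsOf R')) ↔
      ∃ c, IsIsoCert (R, R') c := by
  rw [PresentedGroup.nonempty_mulEquiv_iff]
  constructor
  · rintro ⟨f, g, hfg, hgf⟩
    obtain ⟨fl, rfl⟩ := exists_getD_eq f
    obtain ⟨gl, rfl⟩ := exists_getD_eq g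
    obtain ⟨cs, hcs⟩ := (isLeftInverseSubst_iff_exists_cert R R' fl gl).mp hfg
    obtain ⟨cs', hcs'⟩ := (isLeftInverseSubst_iff_exists_cert R' R gl fl).mp hgf
    exact ⟨((fl, gl), (cs, cs')), hcs, hcs'⟩
  · rintro ⟨⟨⟨fl, gl⟩, cs, cs'⟩, hcs, hcs'⟩
    exact ⟨_, _, (isLeftInverseSubst_iff_exists_cert R R' fl gl).mpr ⟨cs, hcs⟩,
      (isLeftInverseSubst_iff_exists_cert R' R gl fl).mpr ⟨cs', hcs'⟩⟩

end Presentations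

section Computability

open Primrec

variable {α β : Type} [Primcodable α] [Primcodable β]

theorem Primrec.freeGroup_invRev : Primrec (invRev (α := α)) := by
  have : Primrec fun w : List (α × Bool) => (w.map fun x => (x.1, !x.2)).reverse :=
    list_reverse.comp <| list_map .id <|
      pair (fst.comp snd) ((dom_bool (!·)).comp (snd.comp snd))
  exact this.of_eq fun w => by simp [invRev]

theorem Primrec.freeGroup_reduce [DecidableEq α] : Primrec (reduce (α := α)) := by
  have step : Primrec₂ fun (x : α × Bool) (w : List (α × Bool)) =>
      if w.head? = some (x.1, !x.2) then w.tail else x :: w :=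
    ite (Primrec.eq.comp (list_head?.comp snd)
        (option_some.comp (pair (fst.comp fst) ((dom_bool (!·)).comp (snd.comp fst)))))
      (list_tail.comp snd) (list_cons.comp fst snd)
  exact (list_foldr .id (const []) (step.comp (fst.comp snd) (snd.comp snd)).to₂).of_eq
    fun w => (reduce_eq_foldr w).symm

theorem Primrec.freeGroup_signedWord : Primrec₂ (signedWord (α := α)) :=
  cond snd fst (freeGroup_invRev.comp fst)

theorem Primrec.freeGroup_substWord {k : ℕ} : Primrec₂ (substWord (β := β) (k := k)) :=
  list_flatMap snd <| freeGroup_signedWord.comp₂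
    ((list_getD []).comp₂ (fst.comp₂ .left) (fin_val.comp (fst.comp₂ .right))) (snd.comp₂ .right)

theorem Primrec.conjWord : Primrec₂ (conjWord (α := α)) := by
  have hr : Primrec₂ fun (R : List (List (α × Bool))) (e : List (α × Bool) × ℕ × Bool) =>
      R.getD e.2.1 [] := (list_getD []).comp₂ .left (fst.comp₂ (snd.comp₂ .right))
  exact list_append.comp₂
    (list_append.comp₂ (fst.comp₂ .right)
      (freeGroup_signedWord.comp₂ hr (snd.comp₂ (snd.comp₂ .right))))
    (freeGroup_invRev.comp₂ (fst.comp₂ .right))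

theorem Primrec.conjProdWord : Primrec₂ (conjProdWord (α := α)) :=
  list_flatMap snd (Primrec.conjWord.comp₂ (fst.comp₂ .left) .right)

theorem PrimrecPred.isNormalClosureCert [DecidableEq α] {R : β → List (List (α × Bool))}
    {t : β → List (α × Bool)} {c : β → ConjCert α} (hR : Primrec R)
    (ht : Primrec t) (hc : Primrec c) :
    PrimrecPred fun b => IsNormalClosureCert (R b) (t b) (c b) :=
  Primrec.eq.comp (freeGroup_reduce.comp (Primrec.conjProdWord.comp hR hc))
    (freeGroup_reduce.comp ht)

theorem PrimrecPred.allNormalClosureCert [DecidableEq α] {R : β → List (List (α × Bool))}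
    {ts : β → List (List (α × Bool))} {cs : β → List (ConjCert α)}
    (hR : Primrec R) (hts : Primrec ts) (hcs : Primrec cs) :
    PrimrecPred fun b => AllNormalClosureCert (R b) (ts b) (cs b) := by
  have hcert : PrimrecRel fun (i : ℕ) (b : β) =>
      IsNormalClosureCert (R b) ((ts b).getD i []) ((cs b).getD i []) :=
    PrimrecPred.isNormalClosureCert (hR.comp snd) ((list_getD []).comp (hts.comp snd) fst)
      ((list_getD []).comp (hcs.comp snd) fst)
  exact (PrimrecRel.forall_mem_list hcert).comp (list_range.comp (list_length.comp hts)) .id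
    |>.of_eq fun b => by simp [AllNormalClosureCert]

variable {n m : ℕ}

theorem Primrec.inverseSubstWords {R' fl : β → List (Word m)} {gl : β → List (Word n)}
    (hR' : Primrec R') (hfl : Primrec fl) (hgl : Primrec gl) :
    Primrec fun b => inverseSubstWords (R' b) (fl b) (gl b) :=
  list_append.comp (list_map hR' (freeGroup_substWord.comp (hgl.comp fst) snd)) <|
    list_map (const _) <| list_append.comp
      (freeGroup_substWord.comp (hgl.comp fst)
        ((list_getD []).comp (hfl.comp fst) (fin_val.comp snd)))
      (list_cons.comp (pair snd (const false)) (const []))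

theorem PrimrecRel.isIsoCert : PrimrecRel (IsIsoCert (n := n) (m := m)) :=
  (PrimrecPred.allNormalClosureCert (fst.comp fst)
      (Primrec.inverseSubstWords (snd.comp fst) (fst.comp (fst.comp snd))
        (snd.comp (fst.comp snd)))
      (fst.comp (snd.comp snd))).and
    (PrimrecPred.allNormalClosureCert (snd.comp fst)
      (Primrec.inverseSubstWords (fst.comp fst) (snd.comp (fst.comp snd))
        (fst.comp (fst.comp snd)))
      (snd.comp (snd.comp snd)))

theorem PrimrecRel.rePred_exists {R : α → β → Prop} (hR : PrimrecRel R) :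
    REPred fun a => ∃ b, R a b := by
  classical
  have hguard : Primrec₂ fun (p : α × ℕ) (b : β) =>
      Option.guard (fun b => decide (R p.1 b)) b :=
    option_guard (p := fun (q : (α × ℕ) × β) b => R q.1.1 b)
      (PrimrecRel.comp hR (fst.comp (fst.comp fst)) snd) snd
  have hsearch : Partrec fun a => Nat.rfindOpt fun k =>
      (Encodable.decode (α := β) k).bind fun b => Option.guard (fun b => decide (R a b)) b :=
    Partrec.rfindOpt <| to_comp <| option_bind (Primrec.decode.comp snd) hguard
  refine hsearch.dom_re.of_eq fun a => ?_
  rw [Nat.rfindOpt_dom]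
  constructor
  · rintro ⟨k, b, hb⟩
    simp only [Option.mem_def, Option.bind_eq_some_iff, Option.guard_eq_some_iff] at hb
    obtain ⟨b, -, -, hb⟩ := hb
    exact ⟨b, of_decide_eq_true hb⟩
  · rintro ⟨b, hb⟩
    exact ⟨Encodable.encode b, b, by simp [hb]⟩

end Computability

/-- Isomorphism of two presented groups, as a predicate on pairs of finite presentations,
is recursively enumerable. -/
theorem isomorphism_problem_re (n m : ℕ) :
    REPred fun p : List (List (Fin n × Bool)) × List (List (Fin m × Bool)) =>
      Nonempty (PresentedGroup (relsOf p.1) ≃* PresentedGroup (relsOf p.2)) :=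
  PrimrecRel.isIsoCert.rePred_exists.of_eq fun p =>
    (nonempty_mulEquiv_iff_exists_isIsoCert p.1 p.2).symm
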